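/- arXiv:1301.3007 — 7 statements merged into one kernel-verified Lean document; each statement's English description precedes it below -/
import Mathlib

section
/- Fundamental diffusion equation: for the D-iteration defined by F_0 = B, F_n = P_{i_n} F_{n−1}, H_0 = 0, H_n = H_{n−1} + J_{i_n} F_{n−1}, one has for all n: H_n + F_n = P·H_n + F_0. -/
open Matrix BigOperators

/-!
Write `Pᵢ = 1 - Jᵢ + P Jᵢ`. Then `Pᵢ v + Jᵢ v = v + P (Jᵢ v)`, so one step of the iteration
adds `Jᵢ F` to `H` and `P (Jᵢ F) - Jᵢ F` to `F`: the residual `H + F - P H` does not change.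
It is `F₀` at the start, where `H₀ = 0`. Nothing about `Jᵢ` beyond linearity is used.
-/

namespace Matrix

variable {R m : Type*} [Ring R] [Fintype m] [DecidableEq m]

theorem diffusion_mulVec_add_mulVec (P J : Matrix m m R) (v : m → R) :
    (1 - J + P * J) *ᵥ v + J *ᵥ v = v + P *ᵥ (J *ᵥ v) := by
  rw [add_mulVec, sub_mulVec, one_mulVec, ← mulVec_mulVec]
  abel

theorem diffusion_residual_eq_initial (P : Matrix m m R) (J : ℕ → Matrix m m R)
    {F H : ℕ → m → R} (hF : ∀ n, F (n + 1) = (1 - J n + P * J n) *ᵥ F n)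
    (hH : ∀ n, H (n + 1) = H n + J n *ᵥ F n) (n : ℕ) :
    H n + F n - P *ᵥ H n = H 0 + F 0 - P *ᵥ H 0 := by
  induction n with
  | zero => rfl
  | succ n ih =>
    have hstep := diffusion_mulVec_add_mulVec P (J n) (F n)
    rw [← ih, hF, hH, mulVec_add]
    calc H n + J n *ᵥ F n + (1 - J n + P * J n) *ᵥ F n - (P *ᵥ H n + P *ᵥ (J n *ᵥ F n))
        = H n + ((1 - J n + P * J n) *ᵥ F n + J n *ᵥ F n) - P *ᵥ (J n *ᵥ F n) - P *ᵥ H n := by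
          abel
      _ = H n + F n - P *ᵥ H n := by rw [hstep]; abel

end Matrix

theorem fundamental_diffusion_equation_general {N : ℕ} (P : Matrix (Fin N) (Fin N) ℝ)
    (ι : ℕ → Fin N) (F H : ℕ → Fin N → ℝ)
    (hH0 : H 0 = 0)
    (hF : ∀ n, F (n + 1) =
      (1 - Matrix.single (ι n) (ι n) 1 + P * Matrix.single (ι n) (ι n) 1) *ᵥ F n)
    (hH : ∀ n, H (n + 1) = H n + Matrix.single (ι n) (ι n) 1 *ᵥ F n) :
    ∀ n, H n + F n = P *ᵥ H n + F 0 := by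
  intro n
  have hres := diffusion_residual_eq_initial P (fun k ↦ single (ι k) (ι k) 1) hF hH n
  rw [hH0, mulVec_zero, zero_add, sub_zero, sub_eq_iff_eq_add] at hres
  rw [hres, add_comm]

/-- fundamental diffusion equation `H_n + F_n = P·H_n + F_0`. -/
theorem fundamental_diffusion_equation {N : ℕ} (P : Matrix (Fin N) (Fin N) ℝ)
    (B : Fin N → ℝ) (ι : ℕ → Fin N) (F H : ℕ → Fin N → ℝ)
    (hF0 : F 0 = B) (hH0 : H 0 = 0)
    (hF : ∀ n, F (n + 1) =
      (1 - Matrix.single (ι n) (ι n) 1 + P * Matrix.single (ι n) (ι n) 1) *ᵥ F n)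
    (hH : ∀ n, H (n + 1) = H n + Matrix.single (ι n) (ι n) 1 *ᵥ F n) :
    ∀ n, H n + F n = P *ᵥ H n + F 0 :=
  fundamental_diffusion_equation_general P ι F H hH0 hF hH
end

section
/- For the D-iteration, H_n satisfies the recursion H_n = (I − J_{i_n}(I − P)) H_{n−1} + J_{i_n} B. -/
/-!
Each D-iteration step moves the mass `J F` from the fluid vector `F` into the history `H` while
diffusing `P J F` back into `F`, so `F n + (1 - P) H n = B` is invariant. Eliminating `F n`
from `H (n + 1) = H n + J F n` with this invariant gives the recursion.
-/

open Matrix BigOperators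

namespace Matrix

variable {m R : Type*} [Fintype m] [DecidableEq m] [Ring R]

theorem diffusion_step_residual_eq (P J : Matrix m m R) (f h : m → R) :
    (1 - J + P * J) *ᵥ f + (1 - P) *ᵥ (h + J *ᵥ f) = f + (1 - P) *ᵥ h := by
  simp only [add_mulVec, sub_mulVec, one_mulVec, mulVec_add, ← mulVec_mulVec]
  abel

theorem diffusion_residual_eq_of_recurrence (P : Matrix m m R) (J : ℕ → Matrix m m R)
    (B : m → R) (F H : ℕ → m → R) (hF0 : F 0 = B) (hH0 : H 0 = 0)
    (hF : ∀ n, F (n + 1) = (1 - J n + P * J n) *ᵥ F n)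
    (hH : ∀ n, H (n + 1) = H n + J n *ᵥ F n) (n : ℕ) :
    F n + (1 - P) *ᵥ H n = B := by
  induction n with
  | zero => simp [hF0, hH0]
  | succ n ih => rw [hF n, hH n, diffusion_step_residual_eq, ih]

theorem history_step_eq_of_residual_eq {P J : Matrix m m R} {B f h : m → R}
    (hres : f + (1 - P) *ᵥ h = B) :
    h + J *ᵥ f = (1 - J * (1 - P)) *ᵥ h + J *ᵥ B := by
  rw [← hres]
  simp only [sub_mulVec, one_mulVec, mulVec_add, ← mulVec_mulVec]
  abel

end Matrix

/-- the history vector satisfies the recursion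
`H_n = (I - J_{i_n}(I - P)) H_{n-1} + J_{i_n} B`. -/
theorem history_recursion {N : ℕ} (P : Matrix (Fin N) (Fin N) ℝ)
    (B : Fin N → ℝ) (ι : ℕ → Fin N) (F H : ℕ → Fin N → ℝ)
    (hF0 : F 0 = B) (hH0 : H 0 = 0)
    (hF : ∀ n, F (n + 1) =
      (1 - single (ι n) (ι n) 1 + P * single (ι n) (ι n) 1) *ᵥ F n)
    (hH : ∀ n, H (n + 1) = H n + single (ι n) (ι n) 1 *ᵥ F n) :
    ∀ n, H (n + 1) =
      (1 - single (ι n) (ι n) 1 * (1 - P)) *ᵥ H n +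
        single (ι n) (ι n) 1 *ᵥ B := by
  intro n
  rw [hH n]
  exact history_step_eq_of_residual_eq
    (diffusion_residual_eq_of_recurrence P (fun k ↦ single (ι k) (ι k) 1) B F H hF0 hH0 hF hH n)
end

section
/- Fundamental diffusion equation with added fluids: if F_n = P_{i_n}(F_{n−1} + G_{n−1}) and H_n = H_{n−1} + J_{i_n}(F_{n−1} + G_{n−1}) with F_0 = B, H_0 = 0, then for all n: H_n + F_n = P·H_n + F_0 + ∑_{i=0}^{n−1} G_i. -/
open Matrix BigOperators

/-! The quantity `H + F - P·H` is unchanged by the diffusion part of a step: the fluid `J x`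
moved into `H` is exactly what `1 - J + P J` removes from `F`, and its image `P J x` appears
both in `F` and in `P·H`. So each step only adds the injected fluid `G n`, and the identity
follows by telescoping. -/

section

variable {n R : Type*} [Fintype n] [DecidableEq n] [CommRing R]

theorem Matrix.diffusion_step_add_sub_mulVec (P J : Matrix n n R) (h x : n → R) :
    (h + J *ᵥ x) + (1 - J + P * J) *ᵥ x - P *ᵥ (h + J *ᵥ x) = h - P *ᵥ h + x := by
  simp only [add_mulVec, sub_mulVec, one_mulVec, mulVec_add, ← mulVec_mulVec]
  abel

end

theorem fundamental_diffusion_equation_fluids_general {N : ℕ} (P : Matrix (Fin N) (Fin N) ℝ)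
    (G : ℕ → Fin N → ℝ) (ι : ℕ → Fin N) (F H : ℕ → Fin N → ℝ)
    (hH0 : H 0 = 0)
    (hF : ∀ n, F (n + 1) =
      (1 - Matrix.single (ι n) (ι n) 1 + P * Matrix.single (ι n) (ι n) 1) *ᵥ (F n + G n))
    (hH : ∀ n, H (n + 1) = H n + Matrix.single (ι n) (ι n) 1 *ᵥ (F n + G n)) :
    ∀ n, H n + F n = P *ᵥ H n + F 0 + ∑ i ∈ Finset.range n, G i := by
  intro n
  set D : ℕ → Fin N → ℝ := fun k => H k + F k - P *ᵥ H k
  have step (k : ℕ) : D (k + 1) - D k = G k := by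
    simp only [D, hF k, hH k, diffusion_step_add_sub_mulVec]
    abel
  have telescope := Finset.sum_range_sub D n
  simp only [step, D, hH0, mulVec_zero, zero_add, sub_zero] at telescope
  rw [telescope]
  abel

/-- fundamental diffusion equation with added fluids:
`H_n + F_n = P·H_n + F_0 + ∑_{i=0}^{n-1} G_i`. -/
theorem fundamental_diffusion_equation_fluids {N : ℕ} (P : Matrix (Fin N) (Fin N) ℝ)
    (B : Fin N → ℝ) (G : ℕ → Fin N → ℝ) (ι : ℕ → Fin N) (F H : ℕ → Fin N → ℝ)
    (hF0 : F 0 = B) (hH0 : H 0 = 0)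
    (hF : ∀ n, F (n + 1) =
      (1 - Matrix.single (ι n) (ι n) 1 + P * Matrix.single (ι n) (ι n) 1) *ᵥ (F n + G n))
    (hH : ∀ n, H (n + 1) = H n + Matrix.single (ι n) (ι n) 1 *ᵥ (F n + G n)) :
    ∀ n, H n + F n = P *ᵥ H n + F 0 + ∑ i ∈ Finset.range n, G i :=
  fundamental_diffusion_equation_fluids_general P G ι F H hH0 hF hH
end

section
/- If there exists a strictly positive vector V such that for every column j, ∑_i |P_{ij}| v_i ≤ v_j, then the weighted ℓ¹-norm |F_n|_v = ∑_i |v_i (F_n)_i| is non-increasing along the D-iteration: |F_{n+1}|_v ≤ |F_n|_v for any choice of the sequence I. -/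
/-!
One step of the D-iteration at coordinate `i` removes the fluid `f = x i` from coordinate `i`
and redistributes it as `f • P.col i`. By the triangle inequality the weighted ℓ¹-norm grows
by at most `|f| * ∑ j, |P j i| * v j ≤ v i * |f|`, which is exactly the weight the removed
fluid carried at coordinate `i`.
-/

open Matrix

section

variable {ι : Type*} [Fintype ι]

def weightedL1 (v x : ι → ℝ) : ℝ := ∑ i, |v i * x i|

theorem weightedL1_add_le (v x y : ι → ℝ) :
    weightedL1 v (x + y) ≤ weightedL1 v x + weightedL1 v y := by
  simp only [weightedL1, ← Finset.sum_add_distrib, Pi.add_apply, mul_add]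
  exact Finset.sum_le_sum fun i _ => abs_add_le _ _

theorem weightedL1_smul (v x : ι → ℝ) (c : ℝ) :
    weightedL1 v (c • x) = |c| * weightedL1 v x := by
  simp only [weightedL1, Finset.mul_sum, Pi.smul_apply, smul_eq_mul, ← abs_mul]
  congr! 2; ring

theorem weightedL1_col_le {P : Matrix ι ι ℝ} {v : ι → ℝ} (hv : ∀ i, 0 ≤ v i) {i : ι}
    (hcol : ∑ j, |P j i| * v j ≤ v i) : weightedL1 v (P.col i) ≤ v i := by
  simpa [weightedL1, abs_mul, abs_of_nonneg (hv _), mul_comm] using hcol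

variable [DecidableEq ι]

theorem weightedL1_sub_single_add (v x : ι → ℝ) (i : ι) :
    weightedL1 v (x - Pi.single i (x i)) + |v i * x i| = weightedL1 v x := by
  have h_off : ∑ j ∈ Finset.univ.erase i, |v j * (x - Pi.single i (x i) : ι → ℝ) j|
      = ∑ j ∈ Finset.univ.erase i, |v j * x j| :=
    Finset.sum_congr rfl fun j hj => by simp [Finset.ne_of_mem_erase hj]
  rw [weightedL1, weightedL1, ← Finset.sum_erase_add _ _ (Finset.mem_univ i), h_off,
    ← Finset.sum_erase_add _ _ (Finset.mem_univ i)]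
  simp

theorem dIterationStep_mulVec (P : Matrix ι ι ℝ) (i : ι) (x : ι → ℝ) :
    (1 - single i i 1 + P * single i i 1) *ᵥ x = x - Pi.single i (x i) + x i • P.col i := by
  rw [add_mulVec, sub_mulVec, one_mulVec, ← mulVec_mulVec, single_mulVec, one_mul,
    ← Pi.single, mulVec_single, op_smul_eq_smul]

theorem weightedL1_dIterationStep_le {P : Matrix ι ι ℝ} {v : ι → ℝ} (hv : ∀ i, 0 ≤ v i) {i : ι}
    (hcol : ∑ j, |P j i| * v j ≤ v i) (x : ι → ℝ) :
    weightedL1 v ((1 - single i i 1 + P * single i i 1) *ᵥ x) ≤ weightedL1 v x :=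
  calc weightedL1 v ((1 - single i i 1 + P * single i i 1) *ᵥ x)
      ≤ weightedL1 v (x - Pi.single i (x i)) + |x i| * weightedL1 v (P.col i) := by
        rw [dIterationStep_mulVec, ← weightedL1_smul]; exact weightedL1_add_le _ _ _
    _ ≤ weightedL1 v (x - Pi.single i (x i)) + |v i * x i| := by
        rw [abs_mul, abs_of_nonneg (hv i), mul_comm (v i)]
        gcongr
        exact weightedL1_col_le hv hcol
    _ = weightedL1 v x := weightedL1_sub_single_add v x i
end

/-- if `v > 0` and `∑_i |P_{ij}| v_i ≤ v_j` for all columns `j`, then the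
weighted ℓ¹-norm `|F_n|_v = ∑_i |v_i (F_n)_i|` is non-increasing along the D-iteration. -/
theorem weighted_norm_nonincreasing {N : ℕ} (P : Matrix (Fin N) (Fin N) ℝ)
    (v : Fin N → ℝ) (hv : ∀ i, 0 < v i)
    (hcol : ∀ j, ∑ i, |P i j| * v i ≤ v j)
    (ι : ℕ → Fin N) (F : ℕ → Fin N → ℝ)
    (hF : ∀ n, F (n + 1) =
      (1 - Matrix.single (ι n) (ι n) 1 + P * Matrix.single (ι n) (ι n) 1) *ᵥ F n) :
    ∀ n, ∑ i, |v i * F (n + 1) i| ≤ ∑ i, |v i * F n i| := fun n => by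
  simpa only [weightedL1, hF n] using
    weightedL1_dIterationStep_le (fun i => (hv i).le) (hcol (ι n)) (F n)
end

section
/- If the spectral radius of P is strictly less than 1, B ≥ 0 (entrywise), and the sequence I is fair (each index occurs infinitely often), then H_n(P, B, I) converges to the unique solution X of X = P X + B, and F_n → 0. -/
/-! Gelfand's formula turns `ρ(P) < 1` into `Pⁿ → 0`, so `1 - P` is invertible and
`(1 - P)⁻¹ = ∑ Pᵏ` is entrywise nonnegative. The invariant `F n = B - (1 - P) *ᵥ H n` then gives
`H n = (1 - P)⁻¹ *ᵥ (B - F n) ≤ (1 - P)⁻¹ *ᵥ B`, and since `F n ≥ 0` the sequence `H` is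
nondecreasing, hence converges to some `L`, and `F n → B - (1 - P) *ᵥ L`. A visit of index `i`
raises `H n i` by exactly `F n i`, so fairness forces every coordinate of this limit to vanish:
`F n → 0` and `L` solves `X = P *ᵥ X + B`. -/

open Matrix Filter Topology

theorem spectralRadius_lt_one_of_forall_norm_lt_one {A : Type*} [NormedRing A]
    [NormedAlgebra ℂ A] [CompleteSpace A] [Nontrivial A] {a : A}
    (ha : ∀ μ ∈ spectrum ℂ a, ‖μ‖ < 1) : spectralRadius ℂ a < 1 := by
  obtain ⟨μ, hμ, hμa⟩ := spectrum.exists_nnnorm_eq_spectralRadius a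
  rw [← hμa]
  exact_mod_cast ha μ hμ

theorem tendsto_pow_atTop_nhds_zero_of_spectralRadius_lt_one {A : Type*} [NormedRing A]
    [NormedAlgebra ℂ A] [CompleteSpace A] {a : A} (ha : spectralRadius ℂ a < 1) :
    Tendsto (a ^ ·) atTop (𝓝 0) := by
  obtain ⟨r, har, hr1⟩ := ENNReal.lt_iff_exists_nnreal_btwn.1 ha
  have hgelfand := spectrum.pow_nnnorm_pow_one_div_tendsto_nhds_spectralRadius a
  have hpow : ∀ᶠ n : ℕ in atTop, ‖a ^ n‖ ≤ (r : ℝ) ^ n := by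
    filter_upwards [hgelfand.eventually_lt_const har, eventually_gt_atTop 0] with n hn hn0
    rw [one_div, ENNReal.rpow_inv_lt_iff (by positivity), ENNReal.rpow_natCast] at hn
    exact_mod_cast hn.le
  exact squeeze_zero_norm' hpow (tendsto_pow_atTop_nhds_zero_of_lt_one r.2 (by exact_mod_cast hr1))

theorem tendsto_geom_sum_of_tendsto_pow_nhds_zero {R : Type*} [Ring R] [TopologicalSpace R]
    [IsTopologicalRing R] {x q : R} (hx : Tendsto (x ^ ·) atTop (𝓝 0)) (hq : (1 - x) * q = 1) :
    Tendsto (fun n => ∑ k ∈ Finset.range n, x ^ k) atTop (𝓝 q) := by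
  have hsum (n : ℕ) : ∑ k ∈ Finset.range n, x ^ k = (1 - x ^ n) * q := by
    rw [← geom_sum_mul_neg, mul_assoc, hq, mul_one]
  simp_rw [hsum]
  simpa using (tendsto_const_nhds (x := (1 : R)) |>.sub hx).mul_const q

namespace Matrix

theorem mulVec_nonneg {m n R : Type*} [Fintype n] [Semiring R] [PartialOrder R]
    [IsOrderedRing R] {A : Matrix m n R} (hA : ∀ i j, 0 ≤ A i j) {v : n → R} (hv : 0 ≤ v) :
    0 ≤ A *ᵥ v :=
  fun i => Finset.sum_nonneg fun j _ => mul_nonneg (hA i j) (hv j)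

variable {n : Type*} [Fintype n] [DecidableEq n]

theorem single_one_mulVec {R : Type*} [Semiring R] (i : n) (v : n → R) :
    single i i (1 : R) *ᵥ v = Pi.single i (v i) := by
  rw [single_mulVec, one_mul]
  rfl

theorem eq_mulVec_add_iff_one_sub_mulVec_eq {R : Type*} [Ring R] {P : Matrix n n R}
    {B Y : n → R} : Y = P *ᵥ Y + B ↔ (1 - P) *ᵥ Y = B := by
  rw [sub_mulVec, one_mulVec, sub_eq_iff_eq_add']

theorem eq_mulVec_add_iff {K : Type*} [Field K] {P : Matrix n n K} (hP : IsUnit (1 - P))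
    {B Y : n → K} : Y = P *ᵥ Y + B ↔ Y = (1 - P)⁻¹ *ᵥ B := by
  have hdet := (isUnit_iff_isUnit_det _).1 hP
  rw [eq_mulVec_add_iff_one_sub_mulVec_eq]
  constructor
  · rintro rfl
    rw [mulVec_mulVec, nonsing_inv_mul _ hdet, one_mulVec]
  · rintro rfl
    rw [mulVec_mulVec, mul_nonsing_inv _ hdet, one_mulVec]

-- The L2 operator norm makes complex matrices a Banach algebra without changing their topology.
open scoped Matrix.Norms.L2Operator in
theorem tendsto_pow_atTop_nhds_zero_of_forall_norm_lt_one (P : Matrix n n ℝ)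
    (hP : ∀ μ ∈ spectrum ℂ (P.map (algebraMap ℝ ℂ)), ‖μ‖ < 1) :
    Tendsto (P ^ ·) atTop (𝓝 0) := by
  cases isEmpty_or_nonempty n
  · exact tendsto_const_nhds.congr fun _ => Subsingleton.elim _ _
  have hC := tendsto_pow_atTop_nhds_zero_of_spectralRadius_lt_one
    (spectralRadius_lt_one_of_forall_norm_lt_one hP)
  have hre := ((continuous_id.matrix_map Complex.continuous_re).tendsto 0).comp hC
  have hmap (k : ℕ) : P.map (algebraMap ℝ ℂ) ^ k = (P ^ k).map (algebraMap ℝ ℂ) :=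
    (map_pow (algebraMap ℝ ℂ).mapMatrix P k).symm
  convert hre using 1
  · ext k i j
    simp only [Function.comp_apply, id, hmap]
    simp
  · simp

theorem isUnit_one_sub_of_tendsto_pow_nhds_zero {K : Type*} [Field K] [TopologicalSpace K]
    [IsTopologicalRing K] [T2Space K] {P : Matrix n n K} (hP : Tendsto (P ^ ·) atTop (𝓝 0)) :
    IsUnit (1 - P) := by
  refine mulVec_injective_iff_isUnit.1 fun v w hvw => sub_eq_zero.1 ?_
  have hfix : P *ᵥ (v - w) = v - w := by
    have h0 : (1 - P) *ᵥ (v - w) = 0 := by rw [mulVec_sub, hvw, sub_self]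
    rwa [sub_mulVec, one_mulVec, sub_eq_zero, eq_comm] at h0
  have hpow (k : ℕ) : P ^ k *ᵥ (v - w) = v - w := by
    induction k with
    | zero => exact one_mulVec _
    | succ k ih => rw [pow_succ, ← mulVec_mulVec, hfix, ih]
  have hlim : Tendsto (fun k => P ^ k *ᵥ (v - w)) atTop (𝓝 (0 *ᵥ (v - w))) :=
    ((continuous_id.matrix_mulVec continuous_const).tendsto 0).comp hP
  simp_rw [hpow, zero_mulVec] at hlim
  exact tendsto_nhds_unique tendsto_const_nhds hlim

theorem nonsing_inv_one_sub_apply_nonneg {P : Matrix n n ℝ} (hP0 : ∀ i j, 0 ≤ P i j)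
    (hP : Tendsto (P ^ ·) atTop (𝓝 0)) (i j : n) : 0 ≤ (1 - P)⁻¹ i j := by
  have hdet := (isUnit_iff_isUnit_det _).1 (isUnit_one_sub_of_tendsto_pow_nhds_zero hP)
  have hsum := tendsto_geom_sum_of_tendsto_pow_nhds_zero hP (mul_nonsing_inv _ hdet)
  refine ge_of_tendsto' ((hsum.apply_nhds i).apply_nhds j) fun k => ?_
  rw [sum_apply]
  exact Finset.sum_nonneg fun l _ => pow_apply_nonneg hP0 l i j

end Matrix

structure IsDIteration {n : Type*} [Fintype n] [DecidableEq n] (P : Matrix n n ℝ) (B : n → ℝ)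
    (ι : ℕ → n) (F H : ℕ → n → ℝ) : Prop where
  F_zero : F 0 = B
  H_zero : H 0 = 0
  F_succ : ∀ k, F (k + 1) = (1 - single (ι k) (ι k) 1 + P * single (ι k) (ι k) 1) *ᵥ F k
  H_succ : ∀ k, H (k + 1) = H k + single (ι k) (ι k) 1 *ᵥ F k

namespace IsDIteration

variable {n : Type*} [Fintype n] [DecidableEq n] {P : Matrix n n ℝ} {B : n → ℝ} {ι : ℕ → n}
  {F H : ℕ → n → ℝ}

theorem F_succ' (hD : IsDIteration P B ι F H) (k : ℕ) :
    F (k + 1) = F k - Pi.single (ι k) (F k (ι k)) + P *ᵥ Pi.single (ι k) (F k (ι k)) := by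
  rw [hD.F_succ, add_mulVec, sub_mulVec, one_mulVec, ← mulVec_mulVec, single_one_mulVec]

theorem H_succ' (hD : IsDIteration P B ι F H) (k : ℕ) :
    H (k + 1) = H k + Pi.single (ι k) (F k (ι k)) := by
  rw [hD.H_succ, single_one_mulVec]

theorem F_eq_sub (hD : IsDIteration P B ι F H) (k : ℕ) : F k = B - (1 - P) *ᵥ H k := by
  rw [eq_sub_iff_add_eq]
  induction k with
  | zero => rw [hD.F_zero, hD.H_zero, mulVec_zero, add_zero]
  | succ k ih =>
    rw [hD.F_succ', hD.H_succ', mulVec_add, ← ih, sub_mulVec _ _ (Pi.single _ _), one_mulVec]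
    abel

theorem F_nonneg (hD : IsDIteration P B ι F H) (hP : ∀ i j, 0 ≤ P i j) (hB : 0 ≤ B) (k : ℕ) :
    0 ≤ F k := by
  induction k with
  | zero => rw [hD.F_zero]; exact hB
  | succ k ih =>
    rw [hD.F_succ']
    refine add_nonneg (fun j => ?_) (mulVec_nonneg hP (Pi.single_nonneg.2 (ih (ι k))))
    by_cases hj : j = ι k
    · simp [hj]
    · simpa [hj] using ih j

theorem monotone_H (hD : IsDIteration P B ι F H) (hP : ∀ i j, 0 ≤ P i j) (hB : 0 ≤ B) :
    Monotone H :=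
  monotone_nat_of_le_succ fun k => by
    rw [hD.H_succ']
    exact le_add_of_nonneg_right (Pi.single_nonneg.2 (hD.F_nonneg hP hB k (ι k)))

theorem H_le (hD : IsDIteration P B ι F H) (hP : ∀ i j, 0 ≤ P i j) (hB : 0 ≤ B)
    (hunit : IsUnit (1 - P)) (hinv : ∀ i j, 0 ≤ (1 - P)⁻¹ i j) (k : ℕ) :
    H k ≤ (1 - P)⁻¹ *ᵥ B := by
  have hH : H k = (1 - P)⁻¹ *ᵥ B - (1 - P)⁻¹ *ᵥ F k := by
    rw [← mulVec_sub, hD.F_eq_sub, sub_sub_cancel, mulVec_mulVec,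
      nonsing_inv_mul _ ((isUnit_iff_isUnit_det _).1 hunit), one_mulVec]
  rw [hH]
  exact sub_le_self _ (mulVec_nonneg hinv (hD.F_nonneg hP hB k))

theorem tendsto_F (hD : IsDIteration P B ι F H) {L : n → ℝ} (hL : Tendsto H atTop (𝓝 L)) :
    Tendsto F atTop (𝓝 (B - (1 - P) *ᵥ L)) := by
  rw [funext hD.F_eq_sub]
  exact tendsto_const_nhds.sub ((continuous_const.matrix_mulVec continuous_id).tendsto L |>.comp hL)

theorem eq_zero_of_fair (hD : IsDIteration P B ι F H) (hfair : ∀ i, ∃ᶠ k in atTop, ι k = i)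
    {G L : n → ℝ} (hG : Tendsto F atTop (𝓝 G)) (hL : Tendsto H atTop (𝓝 L)) : G = 0 := by
  ext i
  have hLi := tendsto_pi_nhds.1 hL i
  have hjump : Tendsto (fun k => H (k + 1) i - H k i) atTop (𝓝 0) := by
    rw [← sub_self (L i)]
    exact ((tendsto_add_atTop_iff_nat 1).2 hLi).sub hLi
  refine tendsto_nhds_unique_of_frequently_eq (tendsto_pi_nhds.1 hG i) hjump ?_
  refine (hfair i).mono fun k hk => ?_
  rw [hD.H_succ', Pi.add_apply, add_sub_cancel_left, hk, Pi.single_eq_same]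

end IsDIteration

/-- if `ρ(P) < 1`, `B ≥ 0`, and the sequence is fair, then `H_n`
converges to the unique solution of `X = P X + B`, and `F_n → 0`. -/
theorem diteration_converges {N : ℕ} (P : Matrix (Fin N) (Fin N) ℝ) (B : Fin N → ℝ)
    (hPpos : ∀ i j, 0 ≤ P i j) (hB : ∀ i, 0 ≤ B i)
    (hρ : ∀ μ ∈ spectrum ℂ (P.map (algebraMap ℝ ℂ)), ‖μ‖ < 1)
    (ι : ℕ → Fin N) (hfair : ∀ i : Fin N, ∀ m : ℕ, ∃ n ≥ m, ι n = i)
    (F H : ℕ → Fin N → ℝ) (hF0 : F 0 = B) (hH0 : H 0 = 0)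
    (hF : ∀ n, F (n + 1) =
      (1 - Matrix.single (ι n) (ι n) 1 + P * Matrix.single (ι n) (ι n) 1) *ᵥ F n)
    (hH : ∀ n, H (n + 1) = H n + Matrix.single (ι n) (ι n) 1 *ᵥ F n) :
    ∃ X : Fin N → ℝ, X = P *ᵥ X + B ∧ (∀ Y : Fin N → ℝ, Y = P *ᵥ Y + B → Y = X) ∧
      Tendsto H atTop (𝓝 X) ∧ Tendsto F atTop (𝓝 0) := by
  have hD : IsDIteration P B ι F H := ⟨hF0, hH0, hF, hH⟩
  have hpow := P.tendsto_pow_atTop_nhds_zero_of_forall_norm_lt_one hρ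
  have hunit := isUnit_one_sub_of_tendsto_pow_nhds_zero hpow
  have hHL := tendsto_atTop_ciSup (hD.monotone_H hPpos hB) ⟨_, Set.forall_mem_range.2 <|
    hD.H_le hPpos hB hunit (nonsing_inv_one_sub_apply_nonneg hPpos hpow)⟩
  have hFL := hD.tendsto_F hHL
  have hzero := hD.eq_zero_of_fair (fun i => frequently_atTop.2 (hfair i)) hFL hHL
  have hL : ⨆ k, H k = (1 - P)⁻¹ *ᵥ B :=
    (eq_mulVec_add_iff hunit).1 (eq_mulVec_add_iff_one_sub_mulVec_eq.2 (sub_eq_zero.1 hzero).symm)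
  exact ⟨_, (eq_mulVec_add_iff hunit).2 rfl, fun Y => (eq_mulVec_add_iff hunit).1, hL ▸ hHL,
    hzero ▸ hFL⟩
end

section
/- Monotonicity in added fluids: if G_n ≤ G_n' entrywise for all n, B ≥ 0, P ≥ 0, and all G_n, G_n' ≥ 0, then for all n, F_n ≤ F_n' and H_n(P,B,I,G) ≤ H_n(P,B,I,G') entrywise, for the same sequence I. -/
open Matrix BigOperators

/-! Each step matrix `P_k = I - J_k + P J_k` has nonnegative entries, since its column `k` is
that of `P` and its other columns are those of `I`. So every step is monotone in its input, an
induction on `n` carries `F_n ≤ F_n'` forward, and `H_n ≤ H_n'` follows because the increments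
`J_k (F + G)` are monotone too. -/

namespace Matrix

variable {m n R : Type*}

section OrderedSemiring

variable [Semiring R] [PartialOrder R] [IsOrderedRing R]

lemma mulVec_le_mulVec_of_nonneg [Fintype n] {M : Matrix m n R} (hM : ∀ i j, 0 ≤ M i j)
    {u v : n → R} (huv : u ≤ v) : M *ᵥ u ≤ M *ᵥ v :=
  fun i => dotProduct_le_dotProduct_of_nonneg_left huv (hM i)

lemma single_one_nonneg [DecidableEq n] (k i j : n) :
    0 ≤ (single k k 1 : Matrix n n R) i j := by
  rw [single_apply]
  split_ifs
  exacts [zero_le_one, le_rfl]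

end OrderedSemiring

variable [Fintype n] [DecidableEq n]

/-- The paper's `P_k = I - J_k + P J_k`, with `J_k = single k k 1`. -/
def diterationStep [Ring R] (P : Matrix n n R) (k : n) : Matrix n n R :=
  1 - single k k 1 + P * single k k 1

lemma diterationStep_apply [Ring R] (P : Matrix n n R) (k i j : n) :
    diterationStep P k i j = if j = k then P i k else (1 : Matrix n n R) i j := by
  unfold diterationStep
  split_ifs with hj
  · subst hj
    simp [mul_single_apply_same, one_apply, single_apply, eq_comm]
  · simp [mul_single_apply_of_ne _ _ _ _ _ hj, Ne.symm hj]

lemma diterationStep_nonneg [Ring R] [PartialOrder R] [IsOrderedRing R] {P : Matrix n n R}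
    (hP : ∀ i j, 0 ≤ P i j) (k i j : n) : 0 ≤ diterationStep P k i j := by
  rw [diterationStep_apply, one_apply]
  split_ifs
  exacts [hP i k, zero_le_one, le_rfl]

end Matrix

section Comparison

variable {n R : Type*} [Fintype n] [Semiring R] [PartialOrder R] [IsOrderedRing R]

lemma le_of_mulVec_add_recurrence {A : ℕ → Matrix n n R} (hA : ∀ k i j, 0 ≤ A k i j)
    {F F' G G' : ℕ → n → R} (h₀ : F 0 ≤ F' 0) (hG : ∀ k, G k ≤ G' k)
    (hF : ∀ k, F (k + 1) = A k *ᵥ (F k + G k)) (hF' : ∀ k, F' (k + 1) = A k *ᵥ (F' k + G' k)) :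
    ∀ k, F k ≤ F' k
  | 0 => h₀
  | k + 1 => by
    rw [hF, hF']
    exact mulVec_le_mulVec_of_nonneg (hA k)
      (add_le_add (le_of_mulVec_add_recurrence hA h₀ hG hF hF' k) (hG k))

end Comparison

lemma le_of_add_recurrence {α : Type*} [AddCommMonoid α] [PartialOrder α] [IsOrderedAddMonoid α]
    {H H' u u' : ℕ → α} (h₀ : H 0 ≤ H' 0) (hu : ∀ k, u k ≤ u' k)
    (hH : ∀ k, H (k + 1) = H k + u k) (hH' : ∀ k, H' (k + 1) = H' k + u' k) :
    ∀ k, H k ≤ H' k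
  | 0 => h₀
  | k + 1 => by
    rw [hH, hH']
    exact add_le_add (le_of_add_recurrence h₀ hu hH hH' k) (hu k)

theorem diteration_fluids_monotone_general {N : ℕ} (P : Matrix (Fin N) (Fin N) ℝ)
    (B : Fin N → ℝ) (G G' : ℕ → Fin N → ℝ)
    (hPpos : ∀ i j, 0 ≤ P i j)
    (hGG' : ∀ n i, G n i ≤ G' n i)
    (ι : ℕ → Fin N) (F F' H H' : ℕ → Fin N → ℝ)
    (hF0 : F 0 = B) (hF'0 : F' 0 = B) (hH0 : H 0 = 0) (hH'0 : H' 0 = 0)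
    (hF : ∀ n, F (n + 1) =
      (1 - Matrix.single (ι n) (ι n) 1 + P * Matrix.single (ι n) (ι n) 1) *ᵥ (F n + G n))
    (hF' : ∀ n, F' (n + 1) =
      (1 - Matrix.single (ι n) (ι n) 1 + P * Matrix.single (ι n) (ι n) 1) *ᵥ (F' n + G' n))
    (hH : ∀ n, H (n + 1) = H n + Matrix.single (ι n) (ι n) 1 *ᵥ (F n + G n))
    (hH' : ∀ n, H' (n + 1) = H' n + Matrix.single (ι n) (ι n) 1 *ᵥ (F' n + G' n)) :
    ∀ n i, F n i ≤ F' n i ∧ H n i ≤ H' n i := by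
  have hF_le : ∀ n, F n ≤ F' n :=
    le_of_mulVec_add_recurrence (A := fun n => diterationStep P (ι n))
      (fun n => diterationStep_nonneg hPpos (ι n)) (hF0.trans hF'0.symm).le hGG' hF hF'
  have hH_le : ∀ n, H n ≤ H' n :=
    le_of_add_recurrence (hH0.trans hH'0.symm).le
      (fun n => mulVec_le_mulVec_of_nonneg (single_one_nonneg (ι n))
        (add_le_add (hF_le n) (hGG' n)))
      hH hH'
  exact fun n i => ⟨hF_le n i, hH_le n i⟩

/-- monotonicity in the added fluids: if `0 ≤ G_n ≤ G_n'`, `B ≥ 0`, `P ≥ 0`,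
then `F_n ≤ F_n'` and `H_n ≤ H_n'` entrywise for all `n`. -/
theorem diteration_fluids_monotone {N : ℕ} (P : Matrix (Fin N) (Fin N) ℝ)
    (B : Fin N → ℝ) (G G' : ℕ → Fin N → ℝ)
    (hPpos : ∀ i j, 0 ≤ P i j) (hB : ∀ i, 0 ≤ B i)
    (hGpos : ∀ n i, 0 ≤ G n i) (hG'pos : ∀ n i, 0 ≤ G' n i)
    (hGG' : ∀ n i, G n i ≤ G' n i)
    (ι : ℕ → Fin N) (F F' H H' : ℕ → Fin N → ℝ)
    (hF0 : F 0 = B) (hF'0 : F' 0 = B) (hH0 : H 0 = 0) (hH'0 : H' 0 = 0)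
    (hF : ∀ n, F (n + 1) =
      (1 - Matrix.single (ι n) (ι n) 1 + P * Matrix.single (ι n) (ι n) 1) *ᵥ (F n + G n))
    (hF' : ∀ n, F' (n + 1) =
      (1 - Matrix.single (ι n) (ι n) 1 + P * Matrix.single (ι n) (ι n) 1) *ᵥ (F' n + G' n))
    (hH : ∀ n, H (n + 1) = H n + Matrix.single (ι n) (ι n) 1 *ᵥ (F n + G n))
    (hH' : ∀ n, H' (n + 1) = H' n + Matrix.single (ι n) (ι n) 1 *ᵥ (F' n + G' n)) :
    ∀ n i, F n i ≤ F' n i ∧ H n i ≤ H' n i :=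
  diteration_fluids_monotone_general P B G G' hPpos hGG' ι F F' H H' hF0 hF'0 hH0 hH'0 hF hF' hH hH'
end

section
/- Extended monotonicity for negative-fluid diffusion: let (G_n) and (G_n') be sequences of non-positive vectors with ∑_{i=1}^n G_i ≤ ∑_{i=1}^n G_i' entrywise for all n, and let I be a fixed sequence where at each candidate step a coordinate is diffused only if its fluid is negative. Then for all n, H_n(P, B, I, G) ≤ H_n(P, B, I, G') entrywise. -/
/-!
A diffusion at `i` drains `min (v i) 0` from coordinate `i` into the history and spreads it along
column `i` of `P`, so `H (n + 1) = H n + Pi.single (ι n) (min (w n (ι n)) 0)` with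
`w n = F n + G n`, and conservation gives `w n = B + ∑_{k ≤ n} G k + (P - 1) *ᵥ H n`.
If `H n ≤ H' n`, then `P ≥ 0` gives `P *ᵥ H n ≤ P *ᵥ H' n`, hence `w n - (H' n - H n) ≤ w' n`:
the first system's fluid exceeds the second's by at most the history gap, so what it drains
into its history at `ι n` stays below what the second one drains plus that gap.
-/

open Matrix BigOperators

section

variable {m R : Type*} [Fintype m]

theorem history_step_eq [DecidableEq m] [Ring R] [LinearOrder R] (i : m) (v h : m → R) :
    (if v i < 0 then h + single i i 1 *ᵥ v else h) = h + Pi.single i (min (v i) 0) := by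
  split_ifs with hv
  · rw [min_eq_left hv.le, single_mulVec_eq, one_mul, ← Pi.single_smul, smul_eq_mul, mul_one]
  · rw [min_eq_right (not_lt.mp hv), Pi.single_zero, add_zero]

theorem diffusion_step_eq [DecidableEq m] [Ring R] [LinearOrder R] (P : Matrix m m R) (i : m)
    (v : m → R) :
    (if v i < 0 then (1 - single i i 1 + P * single i i 1) *ᵥ v else v)
      = v + (P - 1) *ᵥ Pi.single i (min (v i) 0) := by
  split_ifs with hv
  · rw [min_eq_left hv.le, add_mulVec, sub_mulVec, one_mulVec, ← mulVec_mulVec, sub_mulVec,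
      one_mulVec, single_mulVec_eq, one_mul, ← Pi.single_smul, smul_eq_mul, mul_one]
    abel
  · rw [min_eq_right (not_lt.mp hv), Pi.single_zero, mulVec_zero, add_zero]

theorem eq_add_sum_add_mulVec_of_succ [Ring R] (A : Matrix m m R) (B : m → R)
    (G F H : ℕ → m → R) (hF0 : F 0 = B) (hH0 : H 0 = 0)
    (hF : ∀ n, F (n + 1) = F n + G n + A *ᵥ (H (n + 1) - H n)) (n : ℕ) :
    F n = B + ∑ k ∈ Finset.range n, G k + A *ᵥ H n := by
  induction n with
  | zero => simp [hF0, hH0]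
  | succ n ih =>
    rw [hF, ih, Finset.sum_range_succ, mulVec_sub]
    abel

theorem sub_one_mulVec_sub_le [DecidableEq m] [Ring R] [PartialOrder R] [IsOrderedRing R]
    {P : Matrix m m R} (hP : ∀ i j, 0 ≤ P i j) {h h' : m → R} (hh : h ≤ h') :
    (P - 1) *ᵥ h - (h' - h) ≤ (P - 1) *ᵥ h' := by
  have hPh : P *ᵥ h ≤ P *ᵥ h' := fun i => dotProduct_le_dotProduct_of_nonneg_left hh (hP i)
  simpa [sub_mulVec] using hPh

end

theorem add_single_min_le {m α : Type*} [DecidableEq m] [AddCommGroup α] [LinearOrder α]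
    [IsOrderedAddMonoid α] {h h' w w' : m → α} (hh : h ≤ h') (hw : w - (h' - h) ≤ w') (i : m) :
    h + Pi.single i (min (w i) 0) ≤ h' + Pi.single i (min (w' i) 0) := by
  intro j
  rcases eq_or_ne j i with rfl | hj
  · have hmin : min (w j) 0 - (h' j - h j) ≤ min (w' j) 0 :=
      le_min ((sub_le_sub_right (min_le_left _ _) _).trans (hw j))
        (sub_nonpos.mpr ((min_le_right _ _).trans (sub_nonneg.mpr (hh j))))
    simp only [Pi.add_apply, Pi.single_eq_same]
    calc h j + min (w j) 0 ≤ h j + (min (w' j) 0 + (h' j - h j)) :=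
          add_le_add_right (sub_le_iff_le_add.mp hmin) _
      _ = h' j + min (w' j) 0 := by abel
  · simpa [hj] using hh j

theorem negative_diffusion_monotone_general {N : ℕ} (P : Matrix (Fin N) (Fin N) ℝ)
    (B : Fin N → ℝ) (hPpos : ∀ i j, 0 ≤ P i j)
    (G G' : ℕ → Fin N → ℝ)
    (hGG' : ∀ n i, ∑ k ∈ Finset.range (n + 1), G k i ≤ ∑ k ∈ Finset.range (n + 1), G' k i)
    (ι : ℕ → Fin N) (F F' H H' : ℕ → Fin N → ℝ)
    (hF0 : F 0 = B) (hF'0 : F' 0 = B) (hH0 : H 0 = 0) (hH'0 : H' 0 = 0)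
    (hF : ∀ n, F (n + 1) = if (F n + G n) (ι n) < 0 then
      (1 - single (ι n) (ι n) 1 + P * single (ι n) (ι n) 1) *ᵥ (F n + G n)
      else F n + G n)
    (hF' : ∀ n, F' (n + 1) = if (F' n + G' n) (ι n) < 0 then
      (1 - single (ι n) (ι n) 1 + P * single (ι n) (ι n) 1) *ᵥ (F' n + G' n)
      else F' n + G' n)
    (hH : ∀ n, H (n + 1) = if (F n + G n) (ι n) < 0 then
      H n + single (ι n) (ι n) 1 *ᵥ (F n + G n) else H n)
    (hH' : ∀ n, H' (n + 1) = if (F' n + G' n) (ι n) < 0 then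
      H' n + single (ι n) (ι n) 1 *ᵥ (F' n + G' n) else H' n) :
    ∀ n i, H n i ≤ H' n i := by
  have hHsucc n : H (n + 1) = H n + Pi.single (ι n) (min ((F n + G n) (ι n)) 0) := by
    rw [hH, history_step_eq]
  have hH'succ n : H' (n + 1) = H' n + Pi.single (ι n) (min ((F' n + G' n) (ι n)) 0) := by
    rw [hH', history_step_eq]
  have hFG n : F n + G n = B + ∑ k ∈ Finset.range (n + 1), G k + (P - 1) *ᵥ H n := by
    rw [eq_add_sum_add_mulVec_of_succ (P - 1) B G F H hF0 hH0
      (fun n => by rw [hF, diffusion_step_eq, hHsucc, add_sub_cancel_left]), Finset.sum_range_succ]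
    abel
  have hF'G' n : F' n + G' n = B + ∑ k ∈ Finset.range (n + 1), G' k + (P - 1) *ᵥ H' n := by
    rw [eq_add_sum_add_mulVec_of_succ (P - 1) B G' F' H' hF'0 hH'0
      (fun n => by rw [hF', diffusion_step_eq, hH'succ, add_sub_cancel_left]), Finset.sum_range_succ]
    abel
  intro n
  induction n with
  | zero => simp [hH0, hH'0]
  | succ n ih =>
    rw [hHsucc, hH'succ]
    refine add_single_min_le ih ?_ (ι n)
    have hsum : ∑ k ∈ Finset.range (n + 1), G k ≤ ∑ k ∈ Finset.range (n + 1), G' k := fun i => by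
      simpa only [Finset.sum_apply] using hGG' n i
    calc F n + G n - (H' n - H n)
        = B + ∑ k ∈ Finset.range (n + 1), G k + ((P - 1) *ᵥ H n - (H' n - H n)) := by
          rw [hFG]; abel
      _ ≤ F' n + G' n := by
          rw [hF'G']; gcongr; exact sub_one_mulVec_sub_le hPpos ih

/-- extended monotonicity for negative-fluid diffusion: if `G_n, G_n' ≤ 0`
with `∑_{k≤n} G_k ≤ ∑_{k≤n} G_k'` entrywise, and each system diffuses a candidate
coordinate only when its fluid is negative (same candidate sequence), then
`H_n(P,B,I,G) ≤ H_n(P,B,I,G')` entrywise for all `n`. -/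
theorem negative_diffusion_monotone {N : ℕ} (P : Matrix (Fin N) (Fin N) ℝ)
    (B : Fin N → ℝ) (hPpos : ∀ i j, 0 ≤ P i j)
    (G G' : ℕ → Fin N → ℝ)
    (hGneg : ∀ n i, G n i ≤ 0) (hG'neg : ∀ n i, G' n i ≤ 0)
    (hGG' : ∀ n i, ∑ k ∈ Finset.range (n + 1), G k i ≤ ∑ k ∈ Finset.range (n + 1), G' k i)
    (ι : ℕ → Fin N) (F F' H H' : ℕ → Fin N → ℝ)
    (hF0 : F 0 = B) (hF'0 : F' 0 = B) (hH0 : H 0 = 0) (hH'0 : H' 0 = 0)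
    (hF : ∀ n, F (n + 1) = if (F n + G n) (ι n) < 0 then
      (1 - single (ι n) (ι n) 1 + P * single (ι n) (ι n) 1) *ᵥ (F n + G n)
      else F n + G n)
    (hF' : ∀ n, F' (n + 1) = if (F' n + G' n) (ι n) < 0 then
      (1 - single (ι n) (ι n) 1 + P * single (ι n) (ι n) 1) *ᵥ (F' n + G' n)
      else F' n + G' n)
    (hH : ∀ n, H (n + 1) = if (F n + G n) (ι n) < 0 then
      H n + single (ι n) (ι n) 1 *ᵥ (F n + G n) else H n)
    (hH' : ∀ n, H' (n + 1) = if (F' n + G' n) (ι n) < 0 then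
      H' n + single (ι n) (ι n) 1 *ᵥ (F' n + G' n) else H' n) :
    ∀ n i, H n i ≤ H' n i :=
  negative_diffusion_monotone_general P B hPpos G G' hGG' ι F F' H H' hF0 hF'0 hH0 hH'0 hF hF' hH
    hH'
end
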